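/- Let d ≥ 1, let D be a bounded Lipschitz domain in ℝ^d, let T > 0 and c₂ ≥ 1. Then there exist constants C₁, C₂, δ₀ > 0 (depending only on d, T, c₂ and D) such that for every t ∈ (0, T], every x ∈ D̄ and every δ ∈ (0, δ₀], (1/δ) ∫_{D_δ} t^{−d/2} exp(−|y − x|² / (c₂ t)) dy ≤ C₁/√t + C₂, where D_δ := {y ∈ D : dist(y, ∂D) < δ} and the integral is with respect to Lebesgue measure. -/

import Mathlib

open MeasureTheory Metric Set Filter

noncomputable section

/-- A bounded Lipschitz domain in `ℝ^d`: a nonempty bounded open set such that near every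
boundary point, after an orthogonal change of coordinates, the boundary is the graph of a
Lipschitz function and the domain lies on one side of this graph. -/
def IsBoundedLipschitzDomain (d : ℕ) (D : Set (EuclideanSpace ℝ (Fin d))) : Prop :=
  D.Nonempty ∧ IsOpen D ∧ Bornology.IsBounded D ∧
    ∀ x ∈ frontier D,
      ∃ (e : EuclideanSpace ℝ (Fin d) ≃ₗᵢ[ℝ] EuclideanSpace ℝ (Fin d)) (i₀ : Fin d)
        (f : (Fin d → ℝ) → ℝ) (K : NNReal) (U : Set (EuclideanSpace ℝ (Fin d))),
        LipschitzWith K f ∧ IsOpen U ∧ x ∈ U ∧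
        D ∩ U = {y ∈ U | f (Function.update (fun i => e y i) i₀ 0) < e y i₀} ∧
        frontier D ∩ U = {y ∈ U | f (Function.update (fun i => e y i) i₀ 0) = e y i₀}

/-!
Cover `∂D` by finitely many charts in which `D` lies above the graph of a `K`-Lipschitz
function. In a chart, the height above the graph is `(1 + K)`-Lipschitz and vanishes on `∂D`, so
with `δ₀` a Lebesgue number of the cover, every point of `D_δ` (`δ ≤ δ₀`) lies in some chart at
height in `(0, (1 + K) δ)`. Integrating the Gaussian over such a slab first in the vertical
variable gives at most `(1 + K) δ (π c₂ t)^((d - 1) / 2)`; after multiplying by `t^(-d/2)` and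
dividing by `δ`, this is a constant times `t^(-1/2)`.
-/

open scoped NNReal ENNReal
open Real

theorem integral_exp_neg_sq_sub_div (r a : ℝ) :
    ∫ s : ℝ, exp (-(s - a) ^ 2 / r) = √(π * r) := by
  have h : ∀ s, -(s - a) ^ 2 / r = -r⁻¹ * (s - a) ^ 2 := fun s => by ring
  simp_rw [h]
  rw [integral_sub_right_eq_self (fun s => exp (-r⁻¹ * s ^ 2)) a, integral_gaussian,
    div_inv_eq_mul]

theorem integrable_exp_neg_sq_sub_div {r : ℝ} (hr : 0 < r) (a : ℝ) :
    Integrable fun s : ℝ => exp (-(s - a) ^ 2 / r) := by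
  have h : ∀ s, -(s - a) ^ 2 / r = -r⁻¹ * (s - a) ^ 2 := fun s => by ring
  simp_rw [h]
  exact (integrable_exp_neg_mul_sq (inv_pos.2 hr)).comp_sub_right a

theorem lintegral_exp_neg_sum_sq_sub_div {ι : Type*} [Fintype ι] {r : ℝ} (hr : 0 < r)
    (w : ι → ℝ) :
    ∫⁻ v : ι → ℝ, ENNReal.ofReal (exp (-(∑ j, (v j - w j) ^ 2) / r)) =
      ENNReal.ofReal (√(π * r) ^ Fintype.card ι) := by
  have hprod : ∀ v : ι → ℝ,
      exp (-(∑ j, (v j - w j) ^ 2) / r) = ∏ j, exp (-(v j - w j) ^ 2 / r) := fun v => by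
    rw [← exp_sum, ← Finset.sum_div, ← Finset.sum_neg_distrib]
  simp_rw [hprod]
  rw [volume_pi, ← ofReal_integral_eq_lintegral_ofReal
      (Integrable.fintype_prod fun j => integrable_exp_neg_sq_sub_div hr (w j))
      (ae_of_all _ fun v => by positivity),
    integral_fintype_prod_eq_prod (f := fun j s => exp (-(s - w j) ^ 2 / r))]
  simp_rw [integral_exp_neg_sq_sub_div, Finset.prod_const, Finset.card_univ]

theorem setLIntegral_prod_sub_mem {α : Type*} [MeasurableSpace α] (μ : Measure α) [SFinite μ]
    {g : α → ℝ} (hg : Measurable g) {I : Set ℝ} (hI : MeasurableSet I) {H : α → ℝ≥0∞}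
    (hH : Measurable H) :
    ∫⁻ p in {p : ℝ × α | p.1 - g p.2 ∈ I}, H p.2 ∂(volume.prod μ) = volume I * ∫⁻ a, H a ∂μ := by
  have hS : MeasurableSet {p : ℝ × α | p.1 - g p.2 ∈ I} :=
    measurable_fst.sub (hg.comp measurable_snd) hI
  rw [← lintegral_indicator hS, lintegral_prod_symm _
      ((hH.comp measurable_snd).indicator (f := fun p : ℝ × α => H p.2) hS).aemeasurable,
    ← lintegral_const_mul _ hH]
  refine lintegral_congr fun a => ?_
  change ∫⁻ s, ((fun s => s + -g a) ⁻¹' I).indicator (fun _ => H a) s = _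
  rw [lintegral_indicator_const (measurable_add_const _ hI), measure_preimage_add_right,
    mul_comm]

theorem lipschitzWith_update {ι : Type*} [Fintype ι] [DecidableEq ι] {β : ι → Type*}
    [∀ i, PseudoEMetricSpace (β i)] (i : ι) (b : β i) :
    LipschitzWith 1 fun x : (∀ i, β i) => Function.update x i b := by
  refine LipschitzWith.of_edist_le fun x y => edist_pi_le_iff.2 fun j => ?_
  rcases eq_or_ne j i with rfl | hj
  · simp
  · simpa [Function.update_of_ne hj] using edist_le_pi_edist x y j

theorem Real.rpow_neg_succ_div_two_mul_sqrt_pow {t : ℝ} (ht : 0 < t) (n : ℕ) :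
    t ^ (-((n + 1 : ℕ) : ℝ) / 2) * √t ^ n = (√t)⁻¹ := by
  rw [sqrt_eq_rpow, ← rpow_natCast, ← rpow_mul ht.le, ← rpow_add ht, ← rpow_neg ht.le]
  push_cast
  ring_nf

structure LipschitzGraphChart (d : ℕ) where
  e : EuclideanSpace ℝ (Fin d) ≃ₗᵢ[ℝ] EuclideanSpace ℝ (Fin d)
  i₀ : Fin d
  f : (Fin d → ℝ) → ℝ
  K : ℝ≥0
  lipschitzWith : LipschitzWith K f

namespace LipschitzGraphChart

variable {d : ℕ} (c : LipschitzGraphChart d)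

def height (y : EuclideanSpace ℝ (Fin d)) : ℝ :=
  c.e y c.i₀ - c.f (Function.update (fun i => c.e y i) c.i₀ 0)

theorem lipschitzWith_height : LipschitzWith (1 + c.K) c.height := by
  have hcoord : LipschitzWith 1 fun y : EuclideanSpace ℝ (Fin d) => WithLp.ofLp (c.e y) := by
    have := (PiLp.lipschitzWith_ofLp 2 _).comp c.e.lipschitz
    rwa [mul_one] at this
  have := ((LipschitzWith.eval c.i₀).comp hcoord).sub
    ((c.lipschitzWith.comp (lipschitzWith_update c.i₀ 0)).comp hcoord)
  simp only [mul_one] at this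
  exact this

section

variable {n : ℕ} (c : LipschitzGraphChart (n + 1))

def coordEquiv : EuclideanSpace ℝ (Fin (n + 1)) ≃ᵐ ℝ × (Fin n → ℝ) :=
  c.e.toMeasurableEquiv.trans
    ((MeasurableEquiv.toLp 2 _).symm.trans (MeasurableEquiv.piFinSuccAbove (fun _ => ℝ) c.i₀))

theorem measurePreserving_coordEquiv : MeasurePreserving c.coordEquiv volume volume :=
  (volume_preserving_piFinSuccAbove _ c.i₀).comp
    ((EuclideanSpace.volume_preserving_symm_measurableEquiv_toLp _).comp c.e.measurePreserving)

theorem height_eq (y : EuclideanSpace ℝ (Fin (n + 1))) :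
    c.height y = (c.coordEquiv y).1 - c.f (Fin.insertNth c.i₀ 0 (c.coordEquiv y).2) := by
  simp [height, coordEquiv]

theorem sum_sq_sub_coordEquiv_le (x y : EuclideanSpace ℝ (Fin (n + 1))) :
    ∑ j, ((c.coordEquiv y).2 j - (c.coordEquiv x).2 j) ^ 2 ≤ dist y x ^ 2 := by
  rw [← c.e.dist_map, EuclideanSpace.dist_sq_eq, Fin.sum_univ_succAbove _ c.i₀]
  simpa [coordEquiv, Real.dist_eq, sq_abs, Fin.removeNth] using sq_nonneg _

theorem lintegral_exp_neg_dist_sq_div_le (x : EuclideanSpace ℝ (Fin (n + 1))) {r : ℝ}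
    (hr : 0 < r) (b : ℝ) :
    ∫⁻ y in c.height ⁻¹' Ioo 0 b, ENNReal.ofReal (exp (-(dist y x ^ 2) / r)) ≤
      ENNReal.ofReal (b * √(π * r) ^ n) := by
  set w := (c.coordEquiv x).2
  set G : (Fin n → ℝ) → ℝ≥0∞ := fun v => ENNReal.ofReal (exp (-(∑ j, (v j - w j) ^ 2) / r))
  have hg : Measurable fun v : Fin n → ℝ => c.f (Fin.insertNth c.i₀ 0 v) :=
    (c.lipschitzWith.continuous.comp (continuous_const.finInsertNth c.i₀ continuous_id)).measurable
  have hG : Measurable G := by fun_prop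
  have hpre : c.height ⁻¹' Ioo 0 b =
      c.coordEquiv ⁻¹' {p : ℝ × (Fin n → ℝ) | p.1 - c.f (Fin.insertNth c.i₀ 0 p.2) ∈ Ioo 0 b} := by
    ext y; simp [height_eq]
  calc ∫⁻ y in c.height ⁻¹' Ioo 0 b, ENNReal.ofReal (exp (-(dist y x ^ 2) / r))
      ≤ ∫⁻ y in c.height ⁻¹' Ioo 0 b, G (c.coordEquiv y).2 := by
        refine lintegral_mono fun y => ENNReal.ofReal_le_ofReal (exp_le_exp.2 ?_)
        exact div_le_div_of_nonneg_right (neg_le_neg (c.sum_sq_sub_coordEquiv_le x y)) hr.le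
    _ = ∫⁻ p in {p : ℝ × (Fin n → ℝ) | p.1 - c.f (Fin.insertNth c.i₀ 0 p.2) ∈ Ioo 0 b}, G p.2 := by
        rw [hpre]
        exact c.measurePreserving_coordEquiv.setLIntegral_comp_preimage_emb
          c.coordEquiv.measurableEmbedding (fun p => G p.2) _
    _ = ENNReal.ofReal (b * √(π * r) ^ n) := by
        rw [Measure.volume_eq_prod, setLIntegral_prod_sub_mem _ hg measurableSet_Ioo hG,
          lintegral_exp_neg_sum_sq_sub_div hr, Real.volume_Ioo, sub_zero, Fintype.card_fin,
          ← ENNReal.ofReal_mul' (by positivity)]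

end

theorem setIntegral_exp_neg_dist_sq_div_le {n : ℕ} (s : Finset (LipschitzGraphChart (n + 1)))
    {b : LipschitzGraphChart (n + 1) → ℝ} (hb : ∀ c ∈ s, 0 ≤ b c)
    {A : Set (EuclideanSpace ℝ (Fin (n + 1)))} (hA : A ⊆ ⋃ c ∈ s, c.height ⁻¹' Ioo 0 (b c))
    (x : EuclideanSpace ℝ (Fin (n + 1))) {r : ℝ} (hr : 0 < r) :
    ∫ y in A, exp (-(dist y x ^ 2) / r) ≤ (∑ c ∈ s, b c) * √(π * r) ^ n := by
  set ν := volume.withDensity fun y => ENNReal.ofReal (exp (-(dist y x ^ 2) / r))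
  have hν : ∀ B, ν B = ∫⁻ y in B, ENNReal.ofReal (exp (-(dist y x ^ 2) / r)) :=
    withDensity_apply' _
  rw [integral_eq_lintegral_of_nonneg_ae (ae_of_all _ fun _ => (exp_pos _).le)
    (by fun_prop : Continuous fun y => exp (-(dist y x ^ 2) / r)).aestronglyMeasurable]
  refine ENNReal.toReal_le_of_le_ofReal (mul_nonneg (Finset.sum_nonneg hb) (by positivity)) ?_
  calc ∫⁻ y in A, ENNReal.ofReal (exp (-(dist y x ^ 2) / r))
      = ν A := (hν A).symm
    _ ≤ ∑ c ∈ s, ν (c.height ⁻¹' Ioo 0 (b c)) :=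
        (measure_mono hA).trans (measure_biUnion_finset_le _ _)
    _ ≤ ∑ c ∈ s, ENNReal.ofReal (b c * √(π * r) ^ n) :=
        Finset.sum_le_sum fun c _ => (hν _).trans_le (c.lintegral_exp_neg_dist_sq_div_le x hr _)
    _ = ENNReal.ofReal ((∑ c ∈ s, b c) * √(π * r) ^ n) := by
        rw [Finset.sum_mul, ENNReal.ofReal_sum_of_nonneg fun c hc => by have := hb c hc; positivity]

end LipschitzGraphChart

open LipschitzGraphChart

theorem IsBoundedLipschitzDomain.exists_chart_cover {n : ℕ}
    {D : Set (EuclideanSpace ℝ (Fin (n + 1)))} (hD : IsBoundedLipschitzDomain (n + 1) D) :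
    ∃ s : Finset (LipschitzGraphChart (n + 1)), ∃ δ₀ > 0, ∀ δ ≤ δ₀,
      {y ∈ D | infDist y (frontier D) < δ} ⊆ ⋃ c ∈ s, c.height ⁻¹' Ioo 0 ((1 + c.K) * δ) := by
  classical
  obtain ⟨hne, -, hbdd, hgraph⟩ := hD
  have hfr : (frontier D).Nonempty :=
    nonempty_frontier_iff.2 ⟨hne, fun h => NormedSpace.unbounded_univ ℝ _ (h ▸ hbdd)⟩
  have hcpt : IsCompact (frontier D) :=
    hbdd.isCompact_closure.of_isClosed_subset isClosed_frontier frontier_subset_closure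
  choose e i₀ f K U hf hU hzU hDU hfrU using hgraph
  let chart (z : frontier D) : LipschitzGraphChart (n + 1) :=
    ⟨e z z.2, i₀ z z.2, f z z.2, K z z.2, hf z z.2⟩
  obtain ⟨t, ht⟩ := hcpt.elim_finite_subcover (fun z : frontier D => U z z.2) (fun z => hU _ _)
    fun z hz => mem_iUnion.2 ⟨⟨z, hz⟩, hzU z hz⟩
  obtain ⟨δ₀, hδ₀, hleb⟩ := lebesgue_number_lemma_of_metric hcpt
    (c := fun z : t => U z.1 z.1.2) (fun z => hU _ _) (by simpa [iUnion_subtype] using ht)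
  refine ⟨t.image chart, δ₀, hδ₀, fun δ hδ y ⟨hyD, hy⟩ => ?_⟩
  obtain ⟨ζ, hζ, hyζ⟩ := (infDist_lt_iff hfr).1 hy
  obtain ⟨⟨z, hz⟩, hball⟩ := hleb ζ hζ
  have hyU : y ∈ U z z.2 := hball (mem_ball.2 (hyζ.trans_le hδ))
  have hζU : ζ ∈ U z z.2 := hball (mem_ball_self hδ₀)
  have hy0 : 0 < (chart z).height y := by
    have := hDU z z.2 ▸ mem_inter hyD hyU
    exact sub_pos.2 this.2
  have hζ0 : (chart z).height ζ = 0 := by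
    have := hfrU z z.2 ▸ mem_inter hζ hζU
    exact sub_eq_zero.2 this.2.symm
  refine mem_biUnion (Finset.mem_coe.2 (Finset.mem_image_of_mem chart hz)) ⟨hy0, ?_⟩
  calc (chart z).height y ≤ dist ((chart z).height y) ((chart z).height ζ) := by
        rw [Real.dist_eq, hζ0, sub_zero]; exact le_abs_self _
    _ ≤ (1 + (chart z).K) * dist y ζ := (chart z).lipschitzWith_height.dist_le_mul y ζ
    _ < (1 + (chart z).K) * δ := by gcongr

theorem gaussian_boundary_strip_estimate_general
    (d : ℕ) (hd : 1 ≤ d) (D : Set (EuclideanSpace ℝ (Fin d)))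
    (hD : IsBoundedLipschitzDomain d D) (T : ℝ) (c₂ : ℝ) (hc₂ : 1 ≤ c₂) :
    ∃ C₁ : ℝ, 0 < C₁ ∧ ∃ C₂ : ℝ, 0 < C₂ ∧ ∃ δ₀ : ℝ, 0 < δ₀ ∧
      ∀ t : ℝ, 0 < t → t ≤ T → ∀ x ∈ closure D, ∀ δ : ℝ, 0 < δ → δ ≤ δ₀ →
        δ⁻¹ * (∫ y in {y ∈ D | Metric.infDist y (frontier D) < δ},
            t ^ (-(d : ℝ) / 2) * Real.exp (-(dist y x ^ 2) / (c₂ * t)))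
          ≤ C₁ / Real.sqrt t + C₂ := by
  obtain ⟨n, rfl⟩ : ∃ n, d = n + 1 := Nat.exists_eq_add_of_le' hd
  obtain ⟨s, δ₀, hδ₀, hcover⟩ := IsBoundedLipschitzDomain.exists_chart_cover hD
  set C := (∑ c ∈ s, (1 + (c.K : ℝ))) * √(π * c₂) ^ n
  refine ⟨C + 1, by positivity, 1, one_pos, δ₀, hδ₀, fun t ht _ x _ δ hδ hδδ₀ => ?_⟩
  rw [integral_const_mul]
  calc δ⁻¹ * (t ^ (-((n + 1 : ℕ) : ℝ) / 2) * ∫ y in {y ∈ D | infDist y (frontier D) < δ},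
        exp (-(dist y x ^ 2) / (c₂ * t)))
      ≤ δ⁻¹ * (t ^ (-((n + 1 : ℕ) : ℝ) / 2) *
          ((∑ c ∈ s, (1 + (c.K : ℝ)) * δ) * √(π * (c₂ * t)) ^ n)) := by
        gcongr
        exact setIntegral_exp_neg_dist_sq_div_le s (fun c _ => by positivity) (hcover δ hδδ₀) x
          (by positivity)
    _ = C / √t := by
        rw [← Finset.sum_mul, ← mul_assoc π, sqrt_mul (by positivity : 0 ≤ π * c₂), mul_pow,
          div_eq_mul_inv C, ← rpow_neg_succ_div_two_mul_sqrt_pow ht n]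
        simp only [C]
        field_simp
    _ ≤ (C + 1) / √t := by gcongr; linarith
    _ ≤ (C + 1) / √t + 1 := le_add_of_nonneg_right zero_le_one

/-- boundary-strip estimate (2.5) for the Gaussian upper bound. -/
theorem gaussian_boundary_strip_estimate
    (d : ℕ) (hd : 1 ≤ d) (D : Set (EuclideanSpace ℝ (Fin d)))
    (hD : IsBoundedLipschitzDomain d D) (T : ℝ) (hT : 0 < T) (c₂ : ℝ) (hc₂ : 1 ≤ c₂) :
    ∃ C₁ : ℝ, 0 < C₁ ∧ ∃ C₂ : ℝ, 0 < C₂ ∧ ∃ δ₀ : ℝ, 0 < δ₀ ∧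
      ∀ t : ℝ, 0 < t → t ≤ T → ∀ x ∈ closure D, ∀ δ : ℝ, 0 < δ → δ ≤ δ₀ →
        δ⁻¹ * (∫ y in {y ∈ D | Metric.infDist y (frontier D) < δ},
            t ^ (-(d : ℝ) / 2) * Real.exp (-(dist y x ^ 2) / (c₂ * t)))
          ≤ C₁ / Real.sqrt t + C₂ :=
  gaussian_boundary_strip_estimate_general d hd D hD T c₂ hc₂
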